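/- Let M ≥ 1, let d ∈ ℝ^M have strictly positive entries, let c ≥ 0, and let u, x ∈ ℝ^M. Then the following are equivalent: (i) for every i there exists s_i ∈ [−1,1] with s_i = 1 if x_i > 0 and s_i = −1 if x_i < 0, such that x_i − u_i/d_i + c·s_i/d_i = 0; (ii) for every i, x_i = 𝒯_c(u_i)/d_i, where 𝒯_c(t) = sign(t)·max(|t| − c, 0) is the soft-thresholding operator. -/

import Mathlib

/-!
Multiplying the `i`-th condition by `dᵢ > 0` leaves `Sign(xᵢ)` unchanged, so it becomes
`dᵢxᵢ + c·s = uᵢ` with `s ∈ Sign(dᵢxᵢ)`: the case `dᵢ = 1`. There, `y + c·Sign(y) ∋ u` pins `y`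
down by comparing `u` with `±c`: `y > 0` forces `u = y + c > c`, `y < 0` forces `u < -c`, and
`y = 0` means `u ∈ c·[-1, 1]`, i.e. `|u| ≤ c`; these are the three branches of `𝒯_c`.
-/

/-- The soft-thresholding operator `𝒯_c(t) = sign(t)·max(|t| − c, 0)`. -/
noncomputable def softThresh (c t : ℝ) : ℝ := Real.sign t * max (|t| - c) 0

/-- The paper's `Sign(x)`: the subdifferential of `|·|` at `x`. -/
def signSet (x : ℝ) : Set ℝ := {s | s ∈ Set.Icc (-1) 1 ∧ (0 < x → s = 1) ∧ (x < 0 → s = -1)}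

lemma signSet_mul_left {d : ℝ} (hd : 0 < d) (x : ℝ) : signSet (d * x) = signSet x := by
  simp [signSet, mul_neg_iff, hd, hd.not_gt]

section SoftThresh

variable {c t : ℝ}

lemma softThresh_of_lt (hc : 0 ≤ c) (h : c < t) : softThresh c t = t - c := by
  have ht : 0 < t := hc.trans_lt h
  rw [softThresh, Real.sign_of_pos ht, abs_of_pos ht, max_eq_left (by linarith), one_mul]

lemma softThresh_of_lt_neg (hc : 0 ≤ c) (h : t < -c) : softThresh c t = t + c := by
  have ht : t < 0 := h.trans_le (by linarith)
  rw [softThresh, Real.sign_of_neg ht, abs_of_neg ht, max_eq_left (by linarith)]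
  ring

lemma softThresh_of_abs_le (h : |t| ≤ c) : softThresh c t = 0 := by
  rw [softThresh, max_eq_right (by linarith), mul_zero]

lemma exists_mem_Icc_mul_eq_iff_abs_le (hc : 0 ≤ c) {u : ℝ} :
    (∃ s ∈ Set.Icc (-1) 1, c * s = u) ↔ |u| ≤ c := by
  constructor
  · rintro ⟨s, hs, rfl⟩
    rw [abs_mul, abs_of_nonneg hc]
    exact mul_le_of_le_one_right hc (abs_le.mpr hs)
  · intro hu
    rcases hc.eq_or_lt with rfl | hc0
    · exact ⟨0, by norm_num, by simp [abs_nonpos_iff.mp hu]⟩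
    · refine ⟨u / c, ?_, mul_div_cancel₀ u hc0.ne'⟩
      rw [Set.mem_Icc, le_div_iff₀ hc0, div_le_iff₀ hc0, neg_one_mul, one_mul]
      exact abs_le.mp hu

lemma eq_softThresh_iff (hc : 0 ≤ c) {u y : ℝ} :
    y = softThresh c u ↔ ∃ s ∈ signSet y, y + c * s = u := by
  constructor
  · rintro rfl
    rcases lt_or_ge c u with hu | hu
    · rw [softThresh_of_lt hc hu]
      exact ⟨1, ⟨by norm_num, fun _ => rfl, fun h => by linarith⟩, by ring⟩
    rcases lt_or_ge u (-c) with hu' | hu'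
    · rw [softThresh_of_lt_neg hc hu']
      exact ⟨-1, ⟨by norm_num, fun h => by linarith, fun _ => rfl⟩, by ring⟩
    have habs : |u| ≤ c := abs_le.mpr ⟨hu', hu⟩
    obtain ⟨s, hs, hcs⟩ := (exists_mem_Icc_mul_eq_iff_abs_le hc).mpr habs
    rw [softThresh_of_abs_le habs]
    exact ⟨s, ⟨hs, by simp, by simp⟩, by rw [zero_add, hcs]⟩
  · rintro ⟨s, ⟨hs, hpos, hneg⟩, rfl⟩
    rcases lt_trichotomy y 0 with hy | rfl | hy
    · rw [hneg hy, softThresh_of_lt_neg hc (by linarith)]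
      ring
    · rw [zero_add, softThresh_of_abs_le ((exists_mem_Icc_mul_eq_iff_abs_le hc).mp ⟨s, hs, rfl⟩)]
    · rw [hpos hy, softThresh_of_lt hc (by linarith)]
      ring

end SoftThresh

theorem optimality_iff_soft_threshold_general (M : ℕ)
    (d : Fin M → ℝ) (hd : ∀ i, 0 < d i) (c : ℝ) (hc : 0 ≤ c)
    (u x : Fin M → ℝ) :
    (∀ i, ∃ s : ℝ, s ∈ Set.Icc (-1 : ℝ) 1 ∧ (0 < x i → s = 1) ∧ (x i < 0 → s = -1) ∧
        x i - u i / d i + c * s / d i = 0) ↔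
    (∀ i, x i = softThresh c (u i) / d i) := by
  refine forall_congr' fun i => ?_
  have hdi : d i ≠ 0 := (hd i).ne'
  have h_scaled (s : ℝ) : x i - u i / d i + c * s / d i = 0 ↔ d i * x i + c * s = u i := by
    field_simp
    constructor <;> intro h <;> linarith
  rw [eq_div_iff hdi, mul_comm, eq_softThresh_iff hc, signSet_mul_left (hd i)]
  simp only [signSet, Set.mem_ofPred_eq, and_assoc, h_scaled]

/-- Equivalence of the subgradient optimality condition
`0 ∈ x − u⊘d + c·Sign(x)⊘d` and the soft-thresholding formula `xᵢ = 𝒯_c(uᵢ)/dᵢ`. -/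
theorem optimality_iff_soft_threshold (M : ℕ) (hM : 1 ≤ M)
    (d : Fin M → ℝ) (hd : ∀ i, 0 < d i) (c : ℝ) (hc : 0 ≤ c)
    (u x : Fin M → ℝ) :
    (∀ i, ∃ s : ℝ, s ∈ Set.Icc (-1 : ℝ) 1 ∧ (0 < x i → s = 1) ∧ (x i < 0 → s = -1) ∧
        x i - u i / d i + c * s / d i = 0) ↔
    (∀ i, x i = softThresh c (u i) / d i) :=
  optimality_iff_soft_threshold_general M d hd c hc u x
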